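/- arXiv:1402.1629 — 3 statements merged into one kernel-verified Lean document; each statement's English description precedes it below -/
import Mathlib

section
/- Let $H$ be a real Hilbert space, $f : H \to \mathbb{R}$ convex, lower semi-continuous, and attaining its infimum. Let $(\lambda_k)_{k \geq 1}$ be positive with $\sum_{k=1}^\infty \lambda_k = +\infty$. Define $x_k := J_{\lambda_k}^f(x_{k-1})$ starting from any $x_0$, where $J_\lambda^f(x)$ is the proximal map. Then $\lim_{k\to\infty} f(x_k) = \inf_{y} f(y)$, and moreover $f(x_k) - f(y) \leq \frac{\|y - x_0\|^2}{2\sum_{i=1}^k \lambda_i}$ for every $y$ and every $k \geq 1$. -/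
/-!
The proximal objective `y ↦ f y + ‖a - y‖² / (2λ)` is `1/λ`-strongly convex, so its minimiser `b`
satisfies the three-point inequality `2λ (f b - f y) + ‖a - b‖² + ‖y - b‖² ≤ ‖y - a‖²`.
Taking `y = a` shows that `f (x k)` decreases; for general `y`, weighting the `k` steps by `λ i`
and telescoping gives `(∑ λ i) (f (x k) - f y) ≤ ‖y - x 0‖² / 2`. With `y` a minimiser and
`∑ λ i = ∞` this forces `f (x k) → min f`.
-/

open Filter Finset Topology

theorem StrongConvexOn.add_sq_le_of_isMinOn {E : Type*} [NormedAddCommGroup E] [NormedSpace ℝ E]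
    {s : Set E} {m : ℝ} {g : E → ℝ} {b y : E} (hg : StrongConvexOn s m g)
    (hmin : IsMinOn g s b) (hb : b ∈ s) (hy : y ∈ s) :
    g b + m / 2 * ‖y - b‖ ^ 2 ≤ g y := by
  have hseg : ∀ t : ℝ, 0 < t → t ≤ 1 → g b + (1 - t) * (m / 2 * ‖y - b‖ ^ 2) ≤ g y := by
    intro t ht ht1
    have hmem := hg.1 hy hb ht.le (sub_nonneg.2 ht1) (add_sub_cancel t 1)
    have hconv := hg.2 hy hb ht.le (sub_nonneg.2 ht1) (add_sub_cancel t 1)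
    have hle : g b ≤ g (t • y + (1 - t) • b) := hmin hmem
    simp only [smul_eq_mul] at hconv
    nlinarith
  have hlim : Tendsto (fun t : ℝ => g b + (1 - t) * (m / 2 * ‖y - b‖ ^ 2)) (𝓝[>] 0)
      (𝓝 (g b + (1 - 0) * (m / 2 * ‖y - b‖ ^ 2))) :=
    (Continuous.tendsto (by fun_prop) 0).mono_left nhdsWithin_le_nhds
  rw [sub_zero, one_mul] at hlim
  refine le_of_tendsto hlim ?_
  filter_upwards [Ioc_mem_nhdsGT one_pos] with t ht using hseg t ht.1 ht.2

theorem Antitone.sum_mul_le_of_le_sub {F D μ : ℕ → ℝ} (hF : Antitone F) (hμ : ∀ i, 0 ≤ μ (i + 1))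
    (hstep : ∀ i, μ (i + 1) * F (i + 1) ≤ D i - D (i + 1)) {k : ℕ} (hD : 0 ≤ D k) :
    (∑ i ∈ range k, μ (i + 1)) * F k ≤ D 0 :=
  calc (∑ i ∈ range k, μ (i + 1)) * F k
      ≤ ∑ i ∈ range k, μ (i + 1) * F (i + 1) := by
        rw [sum_mul]
        exact sum_le_sum fun i hi =>
          mul_le_mul_of_nonneg_left (hF (by simpa using hi)) (hμ _)
    _ ≤ ∑ i ∈ range k, (D i - D (i + 1)) := sum_le_sum fun i _ => hstep i
    _ = D 0 - D k := sum_range_sub' D k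
    _ ≤ D 0 := by linarith

theorem Finset.sum_Icc_one_eq_sum_range {M : Type*} [AddCommMonoid M] (f : ℕ → M) (k : ℕ) :
    ∑ i ∈ Icc 1 k, f i = ∑ i ∈ range k, f (i + 1) := by
  rw [range_eq_Ico, sum_Ico_add' f 0 k 1, zero_add, Ico_add_one_right_eq_Icc]

section Proximal

variable {E : Type*} [NormedAddCommGroup E] [InnerProductSpace ℝ E] {f : E → ℝ} {lam : ℝ}

theorem ConvexOn.strongConvexOn_add_norm_sub_sq (hf : ConvexOn ℝ Set.univ f) (a : E)
    (hlam : 0 < lam) :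
    StrongConvexOn Set.univ (1 / lam) fun y => f y + ‖a - y‖ ^ 2 / (2 * lam) := by
  rw [strongConvexOn_iff_convex]
  have haff : ConvexOn ℝ Set.univ fun y => ‖a‖ ^ 2 / (2 * lam) + (-lam⁻¹ • innerₛₗ ℝ a) y :=
    (convexOn_const _ convex_univ).add ((-lam⁻¹ • innerₛₗ ℝ a).convexOn convex_univ)
  refine (hf.add haff).congr fun y _ => ?_
  simp only [Pi.add_apply, LinearMap.smul_apply, innerₛₗ_apply_apply, smul_eq_mul,
    norm_sub_sq_real]
  field_simp
  ring

theorem ConvexOn.prox_three_point (hf : ConvexOn ℝ Set.univ f) (hlam : 0 < lam) {a b : E}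
    (hmin : IsMinOn (fun y => f y + ‖a - y‖ ^ 2 / (2 * lam)) Set.univ b) (y : E) :
    2 * lam * (f b - f y) + ‖a - b‖ ^ 2 + ‖y - b‖ ^ 2 ≤ ‖y - a‖ ^ 2 := by
  have h := (hf.strongConvexOn_add_norm_sub_sq a hlam).add_sq_le_of_isMinOn hmin
    (Set.mem_univ b) (Set.mem_univ y)
  rw [norm_sub_rev a y] at h
  field_simp at h
  linarith

theorem ConvexOn.prox_le (hf : ConvexOn ℝ Set.univ f) (hlam : 0 < lam) {a b : E}
    (hmin : IsMinOn (fun y => f y + ‖a - y‖ ^ 2 / (2 * lam)) Set.univ b) : f b ≤ f a := by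
  have h := hf.prox_three_point hlam hmin a
  rw [sub_self, norm_zero] at h
  nlinarith [sq_nonneg ‖a - b‖]

end Proximal

section ProximalPoint

variable {E : Type*} [NormedAddCommGroup E] [InnerProductSpace ℝ E] {f : E → ℝ} {lam : ℕ → ℝ}
  {x : ℕ → E}

def IsProximalPointSeq (f : E → ℝ) (lam : ℕ → ℝ) (x : ℕ → E) : Prop :=
  ∀ i, IsMinOn (fun y => f y + ‖x i - y‖ ^ 2 / (2 * lam (i + 1))) Set.univ (x (i + 1))

theorem ConvexOn.antitone_comp_of_isProximalPointSeq (hf : ConvexOn ℝ Set.univ f)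
    (hlam : ∀ i, 0 < lam (i + 1)) (hx : IsProximalPointSeq f lam x) : Antitone (f ∘ x) :=
  antitone_nat_of_succ_le fun i => hf.prox_le (hlam i) (hx i)

theorem ConvexOn.mul_sub_le_of_isProximalPointSeq (hf : ConvexOn ℝ Set.univ f)
    (hlam : ∀ i, 0 < lam (i + 1)) (hx : IsProximalPointSeq f lam x) (y : E) (k : ℕ) :
    (2 * ∑ i ∈ range k, lam (i + 1)) * (f (x k) - f y) ≤ ‖y - x 0‖ ^ 2 := by
  have hgain (i : ℕ) :
      2 * lam (i + 1) * (f (x (i + 1)) - f y) ≤ ‖y - x i‖ ^ 2 - ‖y - x (i + 1)‖ ^ 2 := by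
    nlinarith [hf.prox_three_point (hlam i) (hx i) y, norm_nonneg (x i - x (i + 1))]
  have hanti := hf.antitone_comp_of_isProximalPointSeq hlam hx
  rw [mul_sum]
  exact Antitone.sum_mul_le_of_le_sub (F := fun k => f (x k) - f y)
    (D := fun k => ‖y - x k‖ ^ 2) (μ := fun i => 2 * lam i)
    (fun i j hij => sub_le_sub_right (hanti hij) _) (fun i => (mul_pos two_pos (hlam i)).le)
    hgain (sq_nonneg ‖y - x k‖)

end ProximalPoint

theorem stmt6_general {H : Type*} [NormedAddCommGroup H] [InnerProductSpace ℝ H]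
    (f : H → ℝ) (hf : ConvexOn ℝ Set.univ f)
    (hattain : ∃ z : H, ∀ y, f z ≤ f y)
    (lam : ℕ → ℝ) (hlam : ∀ k, 1 ≤ k → 0 < lam k) (hdiv : ¬ Summable fun k => lam (k + 1))
    (x : ℕ → H)
    (hx : ∀ k, 1 ≤ k →
      IsMinOn (fun y => f y + ‖x (k - 1) - y‖ ^ 2 / (2 * lam k)) Set.univ (x k)) :
    Filter.Tendsto (fun k => f (x k)) Filter.atTop (nhds (⨅ y : H, f y)) ∧
      ∀ (y : H) (k : ℕ), 1 ≤ k →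
        f (x k) - f y ≤ ‖y - x 0‖ ^ 2 / (2 * ∑ i ∈ Finset.Icc 1 k, lam i) := by
  have hlam' (i : ℕ) : 0 < lam (i + 1) := hlam (i + 1) i.succ_pos
  have hprox : IsProximalPointSeq f lam x := fun i => by simpa using hx (i + 1) i.succ_pos
  have hrate (y : H) (k : ℕ) (hk : 1 ≤ k) :
      f (x k) - f y ≤ ‖y - x 0‖ ^ 2 / (2 * ∑ i ∈ Icc 1 k, lam i) := by
    have hS : 0 < ∑ i ∈ range k, lam (i + 1) :=
      sum_pos (fun i _ => hlam' i) (nonempty_range_iff.2 (by omega))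
    rw [sum_Icc_one_eq_sum_range, le_div_iff₀ (by positivity), mul_comm]
    exact hf.mul_sub_le_of_isProximalPointSeq hlam' hprox y k
  refine ⟨?_, hrate⟩
  obtain ⟨z, hz⟩ := hattain
  have hinf : ⨅ y, f y = f z :=
    ciInf_eq_of_forall_ge_of_forall_gt_exists_lt hz fun w hw => ⟨z, hw⟩
  have hsum : Tendsto (fun k => ∑ i ∈ Icc 1 k, lam i) atTop atTop := by
    simpa only [sum_Icc_one_eq_sum_range] using
      (not_summable_iff_tendsto_nat_atTop_of_nonneg fun i => (hlam' i).le).1 hdiv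
  have hbound : Tendsto (fun k => f z + ‖z - x 0‖ ^ 2 / (2 * ∑ i ∈ Icc 1 k, lam i)) atTop
      (𝓝 (f z)) := by
    simpa using tendsto_const_nhds.add
      (tendsto_const_nhds.div_atTop (hsum.const_mul_atTop two_pos))
  rw [hinf]
  refine tendsto_of_tendsto_of_tendsto_of_le_of_le' tendsto_const_nhds hbound
    (Eventually.of_forall fun k => hz (x k)) ?_
  filter_upwards [eventually_ge_atTop 1] with k hk
  linarith [hrate z k hk]

theorem stmt6 {H : Type*} [NormedAddCommGroup H] [InnerProductSpace ℝ H]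
    [CompleteSpace H]
    (f : H → ℝ) (hf : ConvexOn ℝ Set.univ f) (hlsc : LowerSemicontinuous f)
    (hattain : ∃ z : H, ∀ y, f z ≤ f y)
    (lam : ℕ → ℝ) (hlam : ∀ k, 1 ≤ k → 0 < lam k) (hdiv : ¬ Summable fun k => lam (k + 1))
    (x : ℕ → H)
    (hx : ∀ k, 1 ≤ k →
      IsMinOn (fun y => f y + ‖x (k - 1) - y‖ ^ 2 / (2 * lam k)) Set.univ (x k)) :
    Filter.Tendsto (fun k => f (x k)) Filter.atTop (nhds (⨅ y : H, f y)) ∧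
      ∀ (y : H) (k : ℕ), 1 ≤ k →
        f (x k) - f y ≤ ‖y - x 0‖ ^ 2 / (2 * ∑ i ∈ Finset.Icc 1 k, lam i) :=
  stmt6_general f hf hattain lam hlam hdiv x hx
end

section
/- Let $H$ be a real Hilbert space $G \subseteq H$ closed convex, and $f_i : G \to \mathbb{R}$ convex, lower semi-continuous, and $L$-Lipschitz for $i = 1, \dots, n$, with $f := \sum_{i=1}^n f_i$ being $K$-convex for some $K > 0$ with unique minimizer $y \in G$. Let $\lambda_k > 0$ satisfy $\lambda_k K < 1$. Define $x_{kn+i} := J_{\lambda_k}^{f_i}(x_{kn+i-1})$ (proximal steps over $G$). Then for all $k$: $\|y - x_{(k+1)n}\|^2 \leq (1 - \lambda_k K)\|y - x_{kn}\|^2 + 2\lambda_k^2 L^2 n(n+1)$. -/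
/-!
Each proximal step `x' = J_λ^g(x)` satisfies the variational inequality
`2λ (g x' - g z) ≤ ‖x - z‖² - ‖x - x'‖² - ‖z - x'‖²` for all `z ∈ G`. Taking `z = x` together with
the Lipschitz bound shows that a step moves by at most `λL`, so within one cycle every iterate
stays within `nλL` of `x_{kn}`. Taking `z = y` and summing over the cycle, the Lipschitz bound
replaces each `f_i(x_{kn+i+1})` by `f_i(x_{kn})` at a cost of `λnL²`, and the growth
`K/2 ‖y - z‖² ≤ f z - f y` of the strongly convex `f` at its minimizer gives the contraction factor.
-/

open Filter Topology Set

lemma le_of_forall_mem_Ioc_le_add_mul {a b c : ℝ} (h : ∀ t ∈ Ioc (0 : ℝ) 1, a ≤ b + t * c) :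
    a ≤ b := by
  have hlim : Tendsto (fun t : ℝ => b + t * c) (𝓝[>] 0) (𝓝 b) := by
    have : Continuous fun t : ℝ => b + t * c := by fun_prop
    simpa using (this.tendsto 0).mono_left nhdsWithin_le_nhds
  exact ge_of_tendsto hlim (eventually_of_mem (Ioc_mem_nhdsGT zero_lt_one) h)

section Hilbert

variable {H : Type*} [NormedAddCommGroup H] [InnerProductSpace ℝ H] {G : Set H}

lemma IsMinOn.mul_sq_norm_sub_le_of_strongConvex {g : H → ℝ} {K : ℝ} (hG : Convex ℝ G)
    (hg : ∀ u ∈ G, ∀ v ∈ G, ∀ t ∈ Icc (0 : ℝ) 1,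
      g ((1 - t) • u + t • v) ≤ (1 - t) * g u + t * g v - K / 2 * t * (1 - t) * ‖u - v‖ ^ 2)
    {y : H} (hy : y ∈ G) (hmin : IsMinOn g G y) {z : H} (hz : z ∈ G) :
    K / 2 * ‖y - z‖ ^ 2 ≤ g z - g y := by
  refine le_of_forall_mem_Ioc_le_add_mul (c := K / 2 * ‖y - z‖ ^ 2) fun t ⟨ht0, ht1⟩ => ?_
  have hmid := hg y hy z hz t ⟨ht0.le, ht1⟩
  have hle : g y ≤ g ((1 - t) • y + t • z) := hmin (hG hy hz (by linarith) ht0.le (by ring))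
  have : t * (K / 2 * ‖y - z‖ ^ 2) ≤ t * (g z - g y + t * (K / 2 * ‖y - z‖ ^ 2)) := by
    nlinarith
  exact le_of_mul_le_mul_left this ht0

/-- Compare `x'` with the points `(1 - t) • x' + t • z` of `G` and let `t → 0`. -/
lemma two_mul_sub_le_of_isMinOn_prox {g : H → ℝ} {lam : ℝ} (hG : Convex ℝ G)
    (hg : ConvexOn ℝ G g) (hlam : 0 < lam) {x x' : H} (hx' : x' ∈ G)
    (hmin : IsMinOn (fun z => g z + ‖x - z‖ ^ 2 / (2 * lam)) G x') {z : H} (hz : z ∈ G) :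
    2 * lam * (g x' - g z) ≤ ‖x - z‖ ^ 2 - ‖x - x'‖ ^ 2 - ‖z - x'‖ ^ 2 := by
  have hpar : ‖x - z‖ ^ 2 - ‖x - x'‖ ^ 2 - ‖z - x'‖ ^ 2 = -2 * inner ℝ (x - x') (z - x') := by
    rw [show x - z = (x - x') - (z - x') by abel, norm_sub_sq_real]
    ring
  rw [hpar]
  refine le_of_forall_mem_Ioc_le_add_mul (c := ‖z - x'‖ ^ 2) fun t ⟨ht0, ht1⟩ => ?_
  have hw : g x' + ‖x - x'‖ ^ 2 / (2 * lam)
      ≤ g ((1 - t) • x' + t • z) + ‖x - ((1 - t) • x' + t • z)‖ ^ 2 / (2 * lam) :=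
    hmin (hG hx' hz (by linarith) ht0.le (by ring))
  have hconv : g ((1 - t) • x' + t • z) ≤ (1 - t) * g x' + t * g z :=
    hg.2 hx' hz (by linarith) ht0.le (by ring)
  have hdist : ‖x - ((1 - t) • x' + t • z)‖ ^ 2
      = ‖x - x'‖ ^ 2 - 2 * t * inner ℝ (x - x') (z - x') + t ^ 2 * ‖z - x'‖ ^ 2 := by
    rw [show x - ((1 - t) • x' + t • z) = (x - x') - t • (z - x') by
      rw [smul_sub, sub_smul, one_smul]; abel, norm_sub_sq_real, real_inner_smul_right,
      norm_smul, mul_pow, Real.norm_of_nonneg ht0.le]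
    ring
  rw [hdist] at hw
  have hscaled : t * (2 * lam * (g x' - g z))
      ≤ t * (-2 * inner ℝ (x - x') (z - x') + t * ‖z - x'‖ ^ 2) := by
    field_simp at hw
    nlinarith
  exact le_of_mul_le_mul_left hscaled ht0

lemma norm_sub_le_of_isMinOn_prox {g : H → ℝ} {lam L : ℝ} (hG : Convex ℝ G)
    (hg : ConvexOn ℝ G g) (hlam : 0 < lam) (hL : 0 ≤ L) {x x' : H} (hx : x ∈ G) (hx' : x' ∈ G)
    (hmin : IsMinOn (fun z => g z + ‖x - z‖ ^ 2 / (2 * lam)) G x')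
    (hLip : g x - g x' ≤ L * ‖x - x'‖) :
    ‖x - x'‖ ≤ lam * L := by
  have hvar := two_mul_sub_le_of_isMinOn_prox hG hg hlam hx' hmin hx
  rw [sub_self, norm_zero] at hvar
  nlinarith [norm_nonneg (x - x'), mul_nonneg hlam.le hL]

open Finset in
lemma sq_norm_sub_le_of_prox_cycle {n : ℕ} {g : Fin n → H → ℝ} {lam L : ℝ} (hG : Convex ℝ G)
    (hg : ∀ i, ConvexOn ℝ G (g i)) (hlam : 0 < lam) (hL : 0 ≤ L)
    (hLip : ∀ i, ∀ u ∈ G, ∀ v ∈ G, |g i u - g i v| ≤ L * ‖u - v‖)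
    {u : ℕ → H} (hu : ∀ j, u j ∈ G)
    (hstep : ∀ i : Fin n, IsMinOn (fun z => g i z + ‖u i - z‖ ^ 2 / (2 * lam)) G (u (i + 1)))
    {z : H} (hz : z ∈ G) :
    ‖z - u n‖ ^ 2 ≤
      ‖z - u 0‖ ^ 2 - 2 * lam * (∑ i, g i (u 0) - ∑ i, g i z) + 2 * lam ^ 2 * L ^ 2 * n ^ 2 := by
  have hdrift : ∀ j ≤ n, ‖u 0 - u j‖ ≤ n * (lam * L) := by
    intro j hj
    have hsteps : dist (u 0) (u j) ≤ ∑ _i ∈ range j, lam * L :=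
      dist_le_range_sum_of_dist_le j fun {m} hm => (dist_eq_norm _ _).trans_le <|
        norm_sub_le_of_isMinOn_prox hG (hg ⟨m, by omega⟩) hlam hL (hu m) (hu (m + 1))
          (hstep ⟨m, by omega⟩) ((le_abs_self _).trans (hLip _ _ (hu m) _ (hu (m + 1))))
    rw [sum_const, card_range, nsmul_eq_mul, dist_eq_norm] at hsteps
    exact hsteps.trans (by gcongr)
  have hone : ∀ i : Fin n, ‖z - u (i + 1)‖ ^ 2 - ‖z - u i‖ ^ 2
      ≤ -2 * lam * (g i (u 0) - g i z) + 2 * lam ^ 2 * L ^ 2 * n := by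
    intro i
    have hvar := two_mul_sub_le_of_isMinOn_prox hG (hg i) hlam (hu _) (hstep i) hz
    have hLi := (le_abs_self _).trans (hLip i _ (hu 0) _ (hu (i + 1)))
    have hdi := hdrift (i + 1) i.isLt
    rw [norm_sub_rev (u i) z] at hvar
    nlinarith [sq_nonneg ‖u i - u (i + 1)‖, mul_le_mul_of_nonneg_left hdi hL]
  have htel : ∑ i : Fin n, (‖z - u (i + 1)‖ ^ 2 - ‖z - u i‖ ^ 2) = ‖z - u n‖ ^ 2 - ‖z - u 0‖ ^ 2 :=
    (Fin.sum_univ_eq_sum_range (fun i => ‖z - u (i + 1)‖ ^ 2 - ‖z - u i‖ ^ 2) n).trans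
      (sum_range_sub (fun i => ‖z - u i‖ ^ 2) n)
  have hsum := sum_le_sum fun i (_ : i ∈ Finset.univ) => hone i
  rw [htel, sum_add_distrib, ← mul_sum, sum_sub_distrib, sum_const, card_univ, Fintype.card_fin,
    nsmul_eq_mul] at hsum
  nlinarith

end Hilbert

theorem stmt11_general {H : Type*} [NormedAddCommGroup H] [InnerProductSpace ℝ H]
    (G : Set H) (hGconv : Convex ℝ G)
    (n : ℕ) (f : Fin n → H → ℝ)
    (hfconv : ∀ i, ConvexOn ℝ G (f i))
    (L : ℝ) (hL : 1 ≤ L)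
    (hLip : ∀ i, ∀ u ∈ G, ∀ v ∈ G, |f i u - f i v| ≤ L * ‖u - v‖)
    (K : ℝ)
    (hKconv : ∀ u ∈ G, ∀ v ∈ G, ∀ t ∈ Set.Icc (0 : ℝ) 1,
      ∑ i, f i ((1 - t) • u + t • v) ≤
        (1 - t) * ∑ i, f i u + t * ∑ i, f i v - K / 2 * t * (1 - t) * ‖u - v‖ ^ 2)
    (y : H) (hyG : y ∈ G) (hymin : ∀ z ∈ G, ∑ i, f i y ≤ ∑ i, f i z)
    (lam : ℕ → ℝ) (hlam : ∀ k, 0 < lam k)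
    (x : ℕ → H) (hxG : ∀ m, x m ∈ G)
    (hstep : ∀ (k : ℕ) (i : Fin n),
      IsMinOn (fun z => f i z + ‖x (k * n + i.1) - z‖ ^ 2 / (2 * lam k)) G
        (x (k * n + i.1 + 1))) :
    ∀ k : ℕ, ‖y - x ((k + 1) * n)‖ ^ 2 ≤
      (1 - lam k * K) * ‖y - x (k * n)‖ ^ 2 + 2 * (lam k) ^ 2 * L ^ 2 * n * (n + 1) := by
  intro k
  have hcycle := sq_norm_sub_le_of_prox_cycle (u := fun j => x (k * n + j)) hGconv hfconv (hlam k)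
    (by linarith) hLip (fun j => hxG _) (hstep k) hyG
  have hgrowth := (isMinOn_iff.2 hymin).mul_sq_norm_sub_le_of_strongConvex
    (g := fun z => ∑ i, f i z) hGconv hKconv hyG (hxG (k * n))
  rw [add_mul, one_mul]
  simp only [add_zero] at hcycle
  nlinarith [hlam k, sq_nonneg (lam k * L), norm_nonneg (y - x (k * n))]

theorem stmt11 {H : Type*} [NormedAddCommGroup H] [InnerProductSpace ℝ H]
    [CompleteSpace H]
    (G : Set H) (hGclosed : IsClosed G) (hGconv : Convex ℝ G)
    (n : ℕ) (hn : 1 ≤ n) (f : Fin n → H → ℝ)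
    (hfconv : ∀ i, ConvexOn ℝ G (f i))
    (hflsc : ∀ i, LowerSemicontinuousOn (f i) G)
    (L : ℝ) (hL : 1 ≤ L)
    (hLip : ∀ i, ∀ u ∈ G, ∀ v ∈ G, |f i u - f i v| ≤ L * ‖u - v‖)
    (K : ℝ) (hK : 0 < K)
    (hKconv : ∀ u ∈ G, ∀ v ∈ G, ∀ t ∈ Set.Icc (0 : ℝ) 1,
      ∑ i, f i ((1 - t) • u + t • v) ≤
        (1 - t) * ∑ i, f i u + t * ∑ i, f i v - K / 2 * t * (1 - t) * ‖u - v‖ ^ 2)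
    (y : H) (hyG : y ∈ G) (hymin : ∀ z ∈ G, ∑ i, f i y ≤ ∑ i, f i z)
    (lam : ℕ → ℝ) (hlam : ∀ k, 0 < lam k) (hlamK : ∀ k, lam k * K < 1)
    (x : ℕ → H) (hxG : ∀ m, x m ∈ G)
    (hstep : ∀ (k : ℕ) (i : Fin n),
      IsMinOn (fun z => f i z + ‖x (k * n + i.1) - z‖ ^ 2 / (2 * lam k)) G
        (x (k * n + i.1 + 1))) :
    ∀ k : ℕ, ‖y - x ((k + 1) * n)‖ ^ 2 ≤
      (1 - lam k * K) * ‖y - x (k * n)‖ ^ 2 + 2 * (lam k) ^ 2 * L ^ 2 * n * (n + 1) :=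
  stmt11_general G hGconv n f hfconv L hL hLip K hKconv y hyG hymin lam hlam x hxG hstep
end

section
/- Let $H$ be a real Hilbert space, $\mu$ a probability measure on a set of $K$-convex lower semi-continuous functions on a closed convex $G \subseteq H$ ($K > 0$) such that $g(x) := \int f(x)\, d\mu(f)$ is finite somewhere, $K$-convex, lower semi-continuous, with minimizer $\mathbb{E}\mu$. Then for all $x \in G$: $\|x - \mathbb{E}\mu\|^2 \leq \frac{2}{K} \int [f(x) - f(\mathbb{E}\mu)]\, d\mu(f)$. -/
open MeasureTheory Filter

theorem stmt15 {H : Type*} [NormedAddCommGroup H] [InnerProductSpace ℝ H]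
    [CompleteSpace H]
    (G : Set H) (hGclosed : IsClosed G) (hGconv : Convex ℝ G)
    {Ω : Type*} [MeasurableSpace Ω] (μ : Measure Ω) [IsProbabilityMeasure μ]
    (K : ℝ) (hK : 0 < K) (L : Ω → H → ℝ)
    (hlsc : ∀ a, LowerSemicontinuousOn (L a) G)
    (hKconv : ∀ a, ∀ u ∈ G, ∀ v ∈ G, ∀ t ∈ Set.Icc (0 : ℝ) 1,
      L a ((1 - t) • u + t • v) ≤
        (1 - t) * L a u + t * L a v - K / 2 * t * (1 - t) * ‖u - v‖ ^ 2)
    (hint : ∀ x ∈ G, Integrable (fun a => L a x) μ)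
    (g : H → ℝ) (hg : ∀ x, g x = ∫ a, L a x ∂μ)
    (hglsc : LowerSemicontinuousOn g G)
    (Eμ : H) (hEμG : Eμ ∈ G) (hEμmin : ∀ z ∈ G, g Eμ ≤ g z) :
    ∀ x ∈ G, ‖x - Eμ‖ ^ 2 ≤ (2 / K) * ∫ a, (L a x - L a Eμ) ∂μ := by
  intro x hx
  set N : ℝ := ‖x - Eμ‖ ^ 2 with hN
  have hNrev : ‖Eμ - x‖ ^ 2 = N := by rw [norm_sub_rev]
  have hIx := hint x hx
  have hIE := hint Eμ hEμG
  have key : ∀ t ∈ Set.Ioo (0:ℝ) 1, K / 2 * (1 - t) * N ≤ g x - g Eμ := by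
    intro t ht
    obtain ⟨ht0, ht1⟩ := ht
    have hz : (1 - t) • Eμ + t • x ∈ G :=
      hGconv hEμG hx (by linarith) ht0.le (by ring)
    have hgz : g ((1 - t) • Eμ + t • x) ≤
        (1 - t) * g Eμ + t * g x - K / 2 * t * (1 - t) * N := by
      rw [hg, hg, hg]
      have hRI1 : Integrable (fun a => (1 - t) * L a Eμ + t * L a x) μ :=
        (hIE.const_mul _).add (hIx.const_mul _)
      have hRI : Integrable (fun a =>
          (1 - t) * L a Eμ + t * L a x - K / 2 * t * (1 - t) * ‖Eμ - x‖ ^ 2) μ :=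
        hRI1.sub (integrable_const _)
      calc ∫ a, L a ((1 - t) • Eμ + t • x) ∂μ
          ≤ ∫ a, ((1 - t) * L a Eμ + t * L a x - K / 2 * t * (1 - t) * ‖Eμ - x‖ ^ 2) ∂μ := by
            refine integral_mono (hint _ hz) hRI ?_
            intro a
            exact hKconv a Eμ hEμG x hx t ⟨ht0.le, ht1.le⟩
        _ = (1 - t) * ∫ a, L a Eμ ∂μ + t * ∫ a, L a x ∂μ - K / 2 * t * (1 - t) * N := by
            have hI1 : Integrable (fun a => (1 - t) * L a Eμ) μ := hIE.const_mul _
            have hI2 : Integrable (fun a => t * L a x) μ := hIx.const_mul _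
            rw [integral_sub hRI1 (integrable_const _), integral_add hI1 hI2,
              integral_const_mul, integral_const_mul, integral_const]
            simp [hNrev]
    have hmin := hEμmin _ hz
    have h1 : t * (K / 2 * (1 - t) * N) ≤ t * (g x - g Eμ) := by nlinarith
    exact le_of_mul_le_mul_left h1 ht0
  have hlim : Tendsto (fun t : ℝ => K / 2 * (1 - t) * N) (nhdsWithin 0 (Set.Ioi 0))
      (nhds (K / 2 * N)) := by
    have hc : Continuous (fun t : ℝ => K / 2 * (1 - t) * N) := by fun_prop
    have h2 : Tendsto (fun t : ℝ => K / 2 * (1 - t) * N) (nhds 0) (nhds (K / 2 * N)) := by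
      have := hc.tendsto 0
      simpa using this
    exact h2.mono_left nhdsWithin_le_nhds
  have hev : ∀ᶠ t in nhdsWithin (0:ℝ) (Set.Ioi 0), K / 2 * (1 - t) * N ≤ g x - g Eμ :=
    Filter.eventually_of_mem (Ioo_mem_nhdsGT_of_mem ⟨le_refl 0, zero_lt_one⟩) key
  have hfin : K / 2 * N ≤ g x - g Eμ := le_of_tendsto hlim hev
  rw [integral_sub hIx hIE, ← hg, ← hg]
  calc N = 2 / K * (K / 2 * N) := by field_simp
    _ ≤ 2 / K * (g x - g Eμ) :=
        mul_le_mul_of_nonneg_left hfin (by positivity)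
end
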